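/- If Γ is walk-summable, then for every pair of vertices i,j, the sum over all walks w from i to j of the walk weight ρ(w) = ∏ₖ R_{w_k w_{k+1}} converges absolutely, and x*_j = Σ_{i∈V} ρ(W_{i→j}) h_i solves Γx = h. -/

import Mathlib

open Classical Finset Matrix

noncomputable section

/-- `i` and `j` are adjacent. -/
def Adj {n : ℕ} (Γ : Matrix (Fin n) (Fin n) ℝ) (i j : Fin n) : Prop :=
  i ≠ j ∧ Γ i j ≠ 0

/-- A walk on the graph: a nonempty list of vertices with consecutive vertices adjacent. -/
def IsWalk {n : ℕ} (Γ : Matrix (Fin n) (Fin n) ℝ) (l : List (Fin n)) : Prop :=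
  l ≠ [] ∧ l.Chain' (Adj Γ)

/-- The weight `ρ(w)`: the product of the entries of `R` along consecutive pairs of the
walk (equal to `1` for length-0 walks). -/
def rhoW {n : ℕ} (R : Matrix (Fin n) (Fin n) ℝ) (l : List (Fin n)) : ℝ :=
  ((l.zip l.tail).map (fun p => R p.1 p.2)).prod

/-- The set `W_{i→j}` of all walks from `i` to `j`. -/
def WalkSet {n : ℕ} (Γ : Matrix (Fin n) (Fin n) ℝ) (i j : Fin n) :
    Set (List (Fin n)) :=
  {l | IsWalk Γ l ∧ l.head? = some i ∧ l.getLast? = some j}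

/-!
Walk-summability says that `|R|` has spectral radius `< 1`, so by Gelfand's formula the Neumann
series `∑ₖ |R|ᵏ` converges. Summing `ρ` over all vertex lists of length `k + 1` from `i` to `j`
gives `(Rᵏ)ᵢⱼ`, and `ρ` vanishes on the lists that are not walks, because `R` vanishes off the
edges (and on the diagonal, as `Γᵢᵢ = 1`). Hence the walk-sums converge absolutely, with
`ρ(W_{i→j}) = (∑ₖ Rᵏ)ᵢⱼ`; as `∑ₖ Rᵏ` is the inverse of `Γ = I - R` and `Γ` is symmetric,
`x* = (∑ₖ Rᵏ)ᵀ h` solves `Γ x = h`.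
-/

lemma summable_norm_pow_of_spectralRadius_lt_one {A : Type*} [NormedRing A]
    [NormedAlgebra ℂ A] [CompleteSpace A] {a : A} (h : spectralRadius ℂ a < 1) :
    Summable fun k => ‖a ^ k‖ := by
  obtain ⟨r, har, hr1⟩ := ENNReal.lt_iff_exists_nnreal_btwn.mp h
  have hr1 : (r : ℝ) < 1 := by exact_mod_cast hr1
  refine Summable.of_norm_bounded_eventually_nat
    (summable_geometric_of_lt_one r.coe_nonneg hr1) ?_
  filter_upwards
    [(spectrum.pow_nnnorm_pow_one_div_tendsto_nhds_spectralRadius a).eventually_lt_const har,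
      Filter.eventually_gt_atTop 0] with k hk hk0
  rw [← ENNReal.coe_rpow_of_nonneg _ (by positivity), ENNReal.coe_lt_coe, one_div,
    NNReal.rpow_inv_lt_iff (by positivity)] at hk
  rw [norm_norm]
  exact_mod_cast hk.le

section Matrix

variable {ι : Type*} [Fintype ι] [DecidableEq ι]

lemma Matrix.abs_pow_apply_le (A : Matrix ι ι ℝ) (k : ℕ) (i j : ι) :
    |(A ^ k) i j| ≤ ((A.map fun a => |a|) ^ k) i j := by
  induction k generalizing j with
  | zero => by_cases h : i = j <;> simp [h]
  | succ k ih =>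
    simp only [pow_succ, Matrix.mul_apply]
    refine (Finset.abs_sum_le_sum_abs _ _).trans (Finset.sum_le_sum fun t _ => ?_)
    rw [abs_mul]
    exact mul_le_mul_of_nonneg_right (ih t) (abs_nonneg _)

lemma Matrix.summable_pow_of_summable_pow_map_abs {A : Matrix ι ι ℝ}
    (h : Summable fun k => (A.map fun a => |a|) ^ k) : Summable fun k => A ^ k := by
  refine Pi.summable.mpr fun i => Pi.summable.mpr fun j => ?_
  exact (Pi.summable.mp (Pi.summable.mp h i) j).of_norm_bounded fun k => abs_pow_apply_le A k i j

lemma Matrix.mulVec_vecMul_tsum_pow_one_sub {α : Type*} [CommRing α] [TopologicalSpace α]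
    [IsTopologicalRing α] [T2Space α] {Γ : Matrix ι ι α} (hΓ : Γ.IsSymm)
    (hs : Summable fun k => (1 - Γ) ^ k) (h : ι → α) :
    Γ *ᵥ (h ᵥ* ∑' k, (1 - Γ) ^ k) = h := by
  have hinv := hs.tsum_pow_mul_one_sub
  rw [sub_sub_cancel] at hinv
  calc Γ *ᵥ (h ᵥ* ∑' k, (1 - Γ) ^ k) = Γᵀ *ᵥ (h ᵥ* ∑' k, (1 - Γ) ^ k) := by rw [hΓ.eq]
    _ = h := by rw [mulVec_transpose, vecMul_vecMul, hinv, vecMul_one]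

lemma Matrix.summable_pow_of_spectralRadius_lt_one {M : Matrix ι ι ℝ}
    (h : spectralRadius ℂ (M.map Complex.ofReal) < 1) :
    Summable fun k => M ^ k := by
  let := Matrix.linftyOpNormedRing (α := ℂ) (n := ι)
  let := Matrix.linftyOpNormedAlgebra (α := ℂ) (n := ι) (R := ℂ)
  have hs : Summable fun k => (M ^ k).map Complex.ofReal :=
    (summable_norm_pow_of_spectralRadius_lt_one h).of_norm.congr fun k =>
      (Matrix.map_pow M Complex.ofRealHom k).symm
  refine Pi.summable.mpr fun i => Pi.summable.mpr fun j => ?_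
  exact Complex.summable_ofReal.mp (Pi.summable.mp (Pi.summable.mp hs i) j)

end Matrix

section WalkSum

variable {n : ℕ}

def listsFromTo (i j : Fin n) : Set (List (Fin n)) :=
  {l | l.head? = some i ∧ l.getLast? = some j}

lemma rhoW_cons_cons (A : Matrix (Fin n) (Fin n) ℝ) (a b : Fin n) (l : List (Fin n)) :
    rhoW A (a :: b :: l) = A a b * rhoW A (b :: l) := by
  simp [rhoW]

lemma rhoW_map_abs (A : Matrix (Fin n) (Fin n) ℝ) :
    ∀ l, rhoW (A.map fun a => |a|) l = |rhoW A l|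
  | [] | [_] => by simp [rhoW]
  | a :: b :: l => by
    rw [rhoW_cons_cons, rhoW_cons_cons, abs_mul, rhoW_map_abs A (b :: l), Matrix.map_apply]

lemma rhoW_nonneg {A : Matrix (Fin n) (Fin n) ℝ} (hA : ∀ p q, 0 ≤ A p q) :
    ∀ l, 0 ≤ rhoW A l
  | [] | [_] => by simp [rhoW]
  | a :: b :: l => by
    rw [rhoW_cons_cons]
    exact mul_nonneg (hA a b) (rhoW_nonneg hA (b :: l))

lemma rhoW_eq_zero_of_not_chain {Γ A : Matrix (Fin n) (Fin n) ℝ}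
    (hA : ∀ p q, ¬ Adj Γ p q → A p q = 0) :
    ∀ l, ¬ l.IsChain (Adj Γ) → rhoW A l = 0
  | [] | [_] => by simp
  | a :: b :: l => by
    rw [List.isChain_cons_cons, rhoW_cons_cons, not_and_or]
    rintro (hab | hl)
    · rw [hA a b hab, zero_mul]
    · rw [rhoW_eq_zero_of_not_chain hA (b :: l) hl, mul_zero]

lemma indicator_rhoW_cons_cons (A : Matrix (Fin n) (Fin n) ℝ) (i a j : Fin n)
    (l : List (Fin n)) :
    (listsFromTo i j).indicator (rhoW A) (i :: a :: l) =
      A i a * (listsFromTo a j).indicator (rhoW A) (a :: l) := by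
  simp only [Set.indicator, listsFromTo, Set.mem_ofPred_eq, List.head?_cons,
    List.getLast?_cons_cons, true_and, rhoW_cons_cons, mul_ite, mul_zero]

lemma sum_indicator_rhoW_cons_ofFn (A : Matrix (Fin n) (Fin n) ℝ) (j : Fin n) :
    ∀ (k : ℕ) (i : Fin n),
      ∑ v : Fin k → Fin n, (listsFromTo i j).indicator (rhoW A) (i :: List.ofFn v) = (A ^ k) i j
  | 0, i => by
    simp [listsFromTo, Set.indicator, rhoW, Matrix.one_apply, eq_comm]
  | k + 1, i => by
    rw [← (Fin.consEquiv fun _ => Fin n).sum_comp, Fintype.sum_prod_type, pow_succ',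
      Matrix.mul_apply]
    refine Finset.sum_congr rfl fun a _ => ?_
    simp only [Fin.consEquiv_apply, List.ofFn_succ, Fin.cons_zero, Fin.cons_succ,
      indicator_rhoW_cons_cons, ← Finset.mul_sum, sum_indicator_rhoW_cons_ofFn A j k a]

lemma sum_indicator_rhoW_ofFn_succ (A : Matrix (Fin n) (Fin n) ℝ) (i j : Fin n) (k : ℕ) :
    ∑ v : Fin (k + 1) → Fin n, (listsFromTo i j).indicator (rhoW A) (List.ofFn v) =
      (A ^ k) i j := by
  rw [← (Fin.consEquiv fun _ => Fin n).sum_comp, Fintype.sum_prod_type, Finset.sum_eq_single i]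
  · simpa only [Fin.consEquiv_apply, List.ofFn_succ, Fin.cons_zero, Fin.cons_succ]
      using sum_indicator_rhoW_cons_ofFn A j k i
  · intro a _ hai
    refine Finset.sum_eq_zero fun v _ => Set.indicator_of_notMem ?_ _
    simp [listsFromTo, hai]
  · simp

lemma summable_indicator_rhoW_of_nonneg {A : Matrix (Fin n) (Fin n) ℝ} (hA : ∀ p q, 0 ≤ A p q)
    {i j : Fin n} (hs : Summable fun k => (A ^ k) i j) :
    Summable ((listsFromTo i j).indicator (rhoW A)) := by
  rw [← List.equivSigmaTuple.symm.summable_iff]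
  refine (summable_sigma_of_nonneg fun x =>
    Set.indicator_nonneg (fun l _ => rhoW_nonneg hA l) _).mpr
    ⟨fun k => (hasSum_fintype _).summable, ?_⟩
  rw [← summable_nat_add_iff 1]
  simpa only [tsum_fintype, List.equivSigmaTuple_symm_apply, sum_indicator_rhoW_ofFn_succ]
    using hs

lemma hasSum_indicator_rhoW (A : Matrix (Fin n) (Fin n) ℝ) {i j : Fin n}
    (hs : Summable fun k => ((A.map fun a => |a|) ^ k) i j) :
    HasSum ((listsFromTo i j).indicator (rhoW A)) (∑' k, (A ^ k) i j) := by
  have hsum : Summable ((listsFromTo i j).indicator (rhoW A)) := by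
    refine (summable_indicator_rhoW_of_nonneg (A := A.map fun a => |a|)
      (fun p q => abs_nonneg (A p q)) hs).of_norm_bounded fun l => ?_
    by_cases hl : l ∈ listsFromTo i j
    · rw [Set.indicator_of_mem hl, Set.indicator_of_mem hl, rhoW_map_abs, Real.norm_eq_abs]
    · simp [hl]
  have hlen := ((List.equivSigmaTuple.symm.hasSum_iff).mpr hsum.hasSum).sigma
    fun k => hasSum_fintype _
  rw [← hasSum_nat_add_iff' 1] at hlen
  have hnil : (listsFromTo i j).indicator (rhoW A) [] = 0 :=
    Set.indicator_of_notMem (by simp [listsFromTo]) _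
  simp only [Finset.sum_range_one, Function.comp_apply, List.equivSigmaTuple_symm_apply,
    sum_indicator_rhoW_ofFn_succ, Fintype.sum_unique, List.ofFn_zero, hnil, sub_zero] at hlen
  rw [hlen.tsum_eq]
  exact hsum.hasSum

lemma hasSum_rhoW_walkSet {Γ R : Matrix (Fin n) (Fin n) ℝ}
    (hR : ∀ p q, ¬ Adj Γ p q → R p q = 0) {i j : Fin n} {s : ℝ}
    (hs : HasSum ((listsFromTo i j).indicator (rhoW R)) s) :
    HasSum (fun w : WalkSet Γ i j => rhoW R w) s := by
  have hsupp : Function.support ((listsFromTo i j).indicator (rhoW R)) ⊆ WalkSet Γ i j := by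
    rw [Set.support_indicator]
    rintro l ⟨⟨hi, hj⟩, hl⟩
    refine ⟨⟨?_, ?_⟩, hi, hj⟩
    · rintro rfl
      simp at hi
    · by_contra hchain
      exact hl (rhoW_eq_zero_of_not_chain hR l hchain)
  rw [← hasSum_subtype_iff_of_support_subset hsupp] at hs
  exact hs.congr_fun fun w => (Set.indicator_of_mem (s := listsFromTo i j) w.2.2 _).symm

lemma summable_abs_rhoW_walkSet {Γ A : Matrix (Fin n) (Fin n) ℝ} {i j : Fin n}
    (hs : Summable fun k => ((A.map fun a => |a|) ^ k) i j) :
    Summable fun w : WalkSet Γ i j => |rhoW A w| := by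
  refine ((summable_indicator_rhoW_of_nonneg (A := A.map fun a => |a|)
    (fun p q => abs_nonneg (A p q)) hs).subtype (WalkSet Γ i j)).congr fun w => ?_
  rw [Function.comp_apply, Set.indicator_of_mem (s := listsFromTo i j) w.2.2, rhoW_map_abs]

lemma one_sub_apply_eq_zero_of_not_adj {Γ : Matrix (Fin n) (Fin n) ℝ} (hdiag : ∀ i, Γ i i = 1)
    (p q : Fin n) (hpq : ¬ Adj Γ p q) : (1 - Γ) p q = 0 := by
  by_cases h : p = q
  · simp [h, hdiag]
  · simp_all [Adj]

end WalkSum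

theorem stmt12_general {n : ℕ} (Γ : Matrix (Fin n) (Fin n) ℝ) (hsym : Γ.IsSymm)
    (hdiag : ∀ i, Γ i i = 1) (h : Fin n → ℝ)
    (hws : spectralRadius ℂ (((1 - Γ).map (fun a => |a|)).map (Complex.ofReal)) < 1) :
    (∀ i j : Fin n, Summable (fun w : WalkSet Γ i j => |rhoW (1 - Γ) w.val|)) ∧
    Γ.mulVec (fun j => ∑ i, (∑' w : WalkSet Γ i j, rhoW (1 - Γ) w.val) * h i) = h := by
  have hsumM := Matrix.summable_pow_of_spectralRadius_lt_one hws
  have hMij : ∀ i j, Summable fun k => (((1 - Γ).map fun a => |a|) ^ k) i j :=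
    fun i j => Pi.summable.mp (Pi.summable.mp hsumM i) j
  have hsumR := Matrix.summable_pow_of_summable_pow_map_abs hsumM
  have hwalk (i j : Fin n) :
      HasSum (fun w : WalkSet Γ i j => rhoW (1 - Γ) w)
        ((∑' k, (1 - Γ) ^ k : Matrix (Fin n) (Fin n) ℝ) i j) := by
    rw [← (Pi.hasSum.mp (Pi.hasSum.mp hsumR.hasSum i) j).tsum_eq]
    exact hasSum_rhoW_walkSet (one_sub_apply_eq_zero_of_not_adj hdiag)
      (hasSum_indicator_rhoW _ (hMij i j))
  refine ⟨fun i j => summable_abs_rhoW_walkSet (hMij i j), ?_⟩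
  convert Matrix.mulVec_vecMul_tsum_pow_one_sub hsym hsumR h using 2
  ext j
  simp only [(hwalk _ j).tsum_eq, vecMul, dotProduct, mul_comm]

/-- If `Γ` is walk-summable then all walk-sums `ρ(W_{i→j})` converge absolutely and
`x*_j = Σ_i ρ(W_{i→j}) h_i` solves `Γ x = h`. -/
theorem stmt12 {n : ℕ} (Γ : Matrix (Fin n) (Fin n) ℝ) (hsym : Γ.IsSymm)
    (hdiag : ∀ i, Γ i i = 1) (hpd : Γ.PosDef) (h : Fin n → ℝ)
    (hws : spectralRadius ℂ (((1 - Γ).map (fun a => |a|)).map (Complex.ofReal)) < 1) :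
    (∀ i j : Fin n, Summable (fun w : WalkSet Γ i j => |rhoW (1 - Γ) w.val|)) ∧
    Γ.mulVec (fun j => ∑ i, (∑' w : WalkSet Γ i j, rhoW (1 - Γ) w.val) * h i) = h :=
  stmt12_general Γ hsym hdiag h hws
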